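/- Let $f:\{0,1\}^n\to\{0,1\}$ be balanced and $f_0$ a dictatorship function. If $N_{\alpha}(f)\leq N_{\alpha}(f_0)$ for all $\alpha\in[1,2]$ (the Li–Médard conjecture for $f$), then $\sum_x T_pf(x)\log T_pf(x) \leq \sum_x T_pf_0(x)\log T_pf_0(x) = 2^n\big(p\log p + (1-p)\log(1-p)\big)/2 \cdot 2$ — i.e., the unsymmetrized Courtade–Kumar inequality holds for $f$. -/

import Mathlib

/-! At `α = 1` both sides of the Li–Médard inequality equal `2^{n-1}`, since `T_p` preserves
total mass and both functions are balanced. Two functions that agree at a point and are ordered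
to its right have ordered right derivatives there, and `d/dα ∑ₓ (T_p f x)^α` at `α = 1` is
`∑ₓ T_p f x · log T_p f x`. For the dictator, `T_p f₀ x` is `1 - p` or `p` according to
`x i`. -/

open Finset Real Filter

/-- The noise operator `T_p` applied to a Boolean function on the Hamming cube. -/
noncomputable def Tp (n : ℕ) (p : ℝ) (f : (Fin n → Bool) → Bool) (x : Fin n → Bool) : ℝ :=
  ∑ y : Fin n → Bool,
    p ^ hammingDist x y * (1 - p) ^ (n - hammingDist x y) * (if f y then 1 else 0)

/-- A Boolean function is balanced if it takes the value 1 exactly half the time. -/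
def IsBalanced (n : ℕ) (f : (Fin n → Bool) → Bool) : Prop :=
  ∑ y : Fin n → Bool, (if f y then (1 : ℝ) else 0) = 2 ^ n / 2

/-- Dictatorship function on coordinate `i`. -/
def dict (n : ℕ) (i : Fin n) : (Fin n → Bool) → Bool := fun y => y i

/-- `N_α(f) = ∑_x (T_p f x)^α` (real power). -/
noncomputable def Nal (n : ℕ) (p : ℝ) (f : (Fin n → Bool) → Bool) (α : ℝ) : ℝ :=
  ∑ x : Fin n → Bool, Tp n p f x ^ α

/-- Symmetrized version `N^sym_α(f) = ∑_x (T_p f x)^α + (1 - T_p f x)^α`. -/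
noncomputable def Nsym (n : ℕ) (p : ℝ) (f : (Fin n → Bool) → Bool) (α : ℝ) : ℝ :=
  ∑ x : Fin n → Bool, (Tp n p f x ^ α + (1 - Tp n p f x) ^ α)

/-- Binary entropy function, in bits. -/
noncomputable def binEnt (t : ℝ) : ℝ := -(t * Real.logb 2 t) - (1 - t) * Real.logb 2 (1 - t)

/-- Mutual information `I(f(Y); X)` for a balanced Boolean function `f`,
with `X` uniform on the cube and `Y` the output of a BSC(p) on input `X`. -/
noncomputable def MI (n : ℕ) (p : ℝ) (f : (Fin n → Bool) → Bool) : ℝ :=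
  1 - ((2 : ℝ) ^ n)⁻¹ * ∑ x : Fin n → Bool, binEnt (Tp n p f x)

open Topology

theorem HasDerivWithinAt.le_of_eventually_le {g h : ℝ → ℝ} {a g' h' : ℝ}
    (hg : HasDerivWithinAt g g' (Set.Ioi a) a) (hh : HasDerivWithinAt h h' (Set.Ioi a) a)
    (ha : g a = h a) (hle : ∀ᶠ x in 𝓝[>] a, g x ≤ h x) : g' ≤ h' := by
  have hg' := (hasDerivWithinAt_iff_tendsto_slope' Set.self_notMem_Ioi).mp hg
  have hh' := (hasDerivWithinAt_iff_tendsto_slope' Set.self_notMem_Ioi).mp hh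
  refine le_of_tendsto_of_tendsto hg' hh' ?_
  filter_upwards [hle, self_mem_nhdsWithin] with x hx (hxa : a < x)
  rw [slope_def_field, slope_def_field, ha]
  exact div_le_div_of_nonneg_right (by linarith) (by linarith)

section BooleanCube

variable {ι R : Type*} [Fintype ι]

theorem Fintype.sum_prod_mul_apply [DecidableEq ι] [CommSemiring R] (g : ι → Bool → R)
    (G : Bool → R) (i : ι) :
    ∑ x : ι → Bool, (∏ j, g j (x j)) * G (x i) =
      (∑ b, g i b * G b) * ∏ j ∈ univ.erase i, ∑ b, g j b := by
  have hsplit : ∀ x : ι → Bool, (∏ j, g j (x j)) * G (x i) =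
      ∏ j, g j (x j) * (if j = i then G (x j) else 1) := fun x => by
    rw [prod_mul_distrib, Finset.prod_ite_eq' univ i (fun j => G (x j)), if_pos (mem_univ i)]
  simp_rw [hsplit]
  rw [← Fintype.prod_sum (fun j b => g j b * if j = i then G b else 1),
    ← mul_prod_erase univ _ (mem_univ i)]
  congr 1
  · simp
  · refine Finset.prod_congr rfl fun j hj => ?_
    simp [ne_of_mem_erase hj]

theorem Fintype.sum_apply_eq_two_pow_mul [DecidableEq ι] [CommSemiring R] (G : Bool → R)
    (i : ι) :
    ∑ x : ι → Bool, G (x i) = 2 ^ (Fintype.card ι - 1) * (G true + G false) := by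
  simpa [card_erase_of_mem, mul_comm, one_add_one_eq_two] using
    Fintype.sum_prod_mul_apply (fun _ _ => (1 : R)) G i

theorem pow_hammingDist_mul_pow_eq_prod [CommRing R] (p : R) (x y : ι → Bool) :
    p ^ hammingDist x y * (1 - p) ^ (Fintype.card ι - hammingDist x y) =
      ∏ j, if x j = y j then 1 - p else p := by
  have hcard : (univ.filter fun j => x j = y j).card = Fintype.card ι - hammingDist x y := by
    have := card_filter_add_card_filter_not (s := univ) (fun j => x j = y j)
    rw [card_univ] at this
    simp only [hammingDist, ne_eq]
    omega
  rw [prod_ite, prod_const, prod_const, hcard, mul_comm]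
  rfl

theorem sum_prod_ite_eq_one [DecidableEq ι] [CommRing R] (p : R) (y : ι → Bool) :
    ∑ x : ι → Bool, ∏ j, (if x j = y j then 1 - p else p) = 1 := by
  rw [← Fintype.prod_sum (fun j b => if b = y j then 1 - p else p)]
  refine prod_eq_one fun j _ => ?_
  cases y j <;> simp

end BooleanCube

section NoiseOperator

variable {n : ℕ} {p : ℝ}

theorem Tp_eq_sum_prod (f : (Fin n → Bool) → Bool) (x : Fin n → Bool) :
    Tp n p f x = ∑ y, (∏ j, if x j = y j then 1 - p else p) * (if f y then 1 else 0) := by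
  simp_rw [Tp, ← pow_hammingDist_mul_pow_eq_prod, Fintype.card_fin]

theorem sum_Tp (f : (Fin n → Bool) → Bool) :
    ∑ x, Tp n p f x = ∑ y : Fin n → Bool, if f y then (1 : ℝ) else 0 := by
  simp_rw [Tp_eq_sum_prod (p := p) f]
  rw [sum_comm]
  simp_rw [← sum_mul, sum_prod_ite_eq_one, one_mul]

theorem Tp_pos (hp : 0 < p) (hp1 : p < 1) {f : (Fin n → Bool) → Bool} (hf : ∃ y, f y)
    (x : Fin n → Bool) : 0 < Tp n p f x := by
  obtain ⟨y, hy⟩ := hf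
  have hp1' : 0 < 1 - p := sub_pos.mpr hp1
  refine sum_pos' (fun z _ => by positivity) ⟨y, mem_univ y, ?_⟩
  simp only [hy, if_true, mul_one]
  positivity

theorem Tp_dict (i : Fin n) (x : Fin n → Bool) :
    Tp n p (dict n i) x = if x i then 1 - p else p := by
  rw [Tp_eq_sum_prod]
  refine (Fintype.sum_prod_mul_apply (fun j b => if x j = b then 1 - p else p)
    (fun b => if b then 1 else 0) i).trans ?_
  rw [Finset.prod_eq_one fun j _ => by cases x j <;> simp]
  cases x i <;> simp

theorem sum_apply_eq_two_pow_div_two_mul (i : Fin n) (G : Bool → ℝ) :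
    ∑ x : Fin n → Bool, G (x i) = 2 ^ n / 2 * (G true + G false) := by
  rw [Fintype.sum_apply_eq_two_pow_mul, Fintype.card_fin,
    pow_sub₀ _ two_ne_zero (Nat.one_le_of_lt i.isLt), pow_one, div_eq_mul_inv]

theorem isBalanced_dict (i : Fin n) : IsBalanced n (dict n i) := by
  unfold IsBalanced dict
  simpa only [if_true, Bool.false_eq_true, if_false, add_zero, mul_one] using
    sum_apply_eq_two_pow_div_two_mul i fun b => if b then (1 : ℝ) else 0

theorem IsBalanced.exists_eq_true {f : (Fin n → Bool) → Bool} (hf : IsBalanced n f) :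
    ∃ y, f y := by
  by_contra! h
  have : (2 : ℝ) ^ n / 2 = 0 := by simpa [IsBalanced, h] using hf.symm
  exact absurd this (by positivity)

theorem sum_Tp_dict_mul_log (i : Fin n) :
    ∑ x, Tp n p (dict n i) x * Real.log (Tp n p (dict n i) x) =
      2 ^ n / 2 * (p * Real.log p + (1 - p) * Real.log (1 - p)) := by
  simp_rw [Tp_dict]
  rw [sum_apply_eq_two_pow_div_two_mul i fun b =>
    (if b then 1 - p else p) * Real.log (if b then 1 - p else p)]
  simp only [if_true, Bool.false_eq_true, if_false]
  ring

theorem Nal_one_of_isBalanced {f : (Fin n → Bool) → Bool} (hf : IsBalanced n f) :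
    Nal n p f 1 = 2 ^ n / 2 := by
  simp_rw [Nal, Real.rpow_one, sum_Tp]
  exact hf

theorem hasDerivAt_Nal_one {f : (Fin n → Bool) → Bool} (hpos : ∀ x, 0 < Tp n p f x) :
    HasDerivAt (Nal n p f) (∑ x, Tp n p f x * Real.log (Tp n p f x)) 1 := by
  have hterm (x : Fin n → Bool) :
      HasDerivAt (fun α : ℝ => Tp n p f x ^ α) (Tp n p f x * Real.log (Tp n p f x)) 1 := by
    simpa using (Real.hasStrictDerivAt_const_rpow (hpos x) 1).hasDerivAt
  exact HasDerivAt.fun_sum fun x _ => hterm x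

end NoiseOperator

/-- If the Li–Médard conjecture holds for a balanced `f` (i.e. `N_α(f) ≤ N_α(f_0)` for all
`α ∈ [1,2]`), then the unsymmetrized Courtade–Kumar inequality holds for `f`, where the
dictatorship value is `2^{n-1}(p log p + (1-p) log(1-p))`. -/
theorem li_medard_implies_unsym_CK (n : ℕ) (p : ℝ) (hp : 0 < p) (hp2 : p < 1/2)
    (f : (Fin n → Bool) → Bool) (hf : IsBalanced n f) (i : Fin n)
    (hLM : ∀ α ∈ Set.Icc (1 : ℝ) 2, Nal n p f α ≤ Nal n p (dict n i) α) :
    ∑ x : Fin n → Bool, Tp n p f x * Real.log (Tp n p f x) ≤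
      ∑ x : Fin n → Bool, Tp n p (dict n i) x * Real.log (Tp n p (dict n i) x) ∧
    ∑ x : Fin n → Bool, Tp n p (dict n i) x * Real.log (Tp n p (dict n i) x) =
      2 ^ n / 2 * (p * Real.log p + (1 - p) * Real.log (1 - p)) := by
  refine ⟨?_, sum_Tp_dict_mul_log i⟩
  have hp1 : p < 1 := by linarith
  have hderiv_f := hasDerivAt_Nal_one (Tp_pos hp hp1 hf.exists_eq_true)
  have hderiv_dict := hasDerivAt_Nal_one (Tp_pos hp hp1 (isBalanced_dict i).exists_eq_true)
  refine hderiv_f.hasDerivWithinAt.le_of_eventually_le hderiv_dict.hasDerivWithinAt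
    (by rw [Nal_one_of_isBalanced hf, Nal_one_of_isBalanced (isBalanced_dict i)]) ?_
  filter_upwards [Ioo_mem_nhdsGT (by norm_num : (1 : ℝ) < 2)] with α hα
  exact hLM α (Set.Ioo_subset_Icc_self hα)
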